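/- arXiv:2012.05678 — 2 statements merged into one kernel-verified Lean document; each statement's English description precedes it below -/
import Mathlib

section
/- Let V = U ⊕ W be a Lagrangian decomposition with respect to a non-degenerate symmetric bilinear form F, and let t ∈ U ⊗ U with associated linear map f_t : W → U, f_t(w) = Σ F(w, aᵢ) bᵢ for t = Σ aᵢ ⊗ bᵢ. Define W_t = { w + f_t(w) | w ∈ W }. Then V = U ⊕ W_t, W_t is commensurable with W (the quotient (W + W_t)/(W ∩ W_t) is finite dimensional), the map W → W_t, w ↦ w + f_t(w) is a linear isomorphism, and W_t = W_{t'} if and only if t = t'. -/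
/-!
Because `V = U ⊕ W`, the subspaces `{w + f w}` for linear `f : W → U` are complements of `U`,
`w ↦ w + f w` is injective, and the subspace determines `f`. So everything reduces to two facts
about `j = tensorToHom F U W`: it is injective, and each `j t` has finite rank (which gives
commensurability, as `W ∩ W_t ⊇ ker (j t)`). `j` factors as `U ⊗ U → W* ⊗ U → Hom(W, U)`; the
first map is injective because `u ↦ F(·, u)|_W` is (`U` is isotropic and `F` non-degenerate) and
tensoring over a field preserves injectivity, and the second, `dualTensorHom`, is injective with
finite-rank values since every tensor lives in `W* ⊗ N` for some finite-dimensional `N ≤ U`.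
-/

open TensorProduct

/-- The linear map `j : U ⊗ U → Hom(W, U)` sending `t = Σ aᵢ ⊗ bᵢ` to `w ↦ Σ F(w, aᵢ) bᵢ`. -/
noncomputable def tensorToHom
    {k V : Type*} [Field k] [AddCommGroup V] [Module k V]
    (F : LinearMap.BilinForm k V) (U W : Submodule k V) :
    (U ⊗[k] U) →ₗ[k] (W →ₗ[k] U) :=
  (dualTensorHom k W U).comp
    (TensorProduct.map
      ((LinearMap.lcomp k k W.subtype).comp ((LinearMap.flip F).comp U.subtype)) LinearMap.id)

/-- The graph subspace `W_t = { w + f_t(w) | w ∈ W }`. -/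
noncomputable def graphSubspace
    {k V : Type*} [Field k] [AddCommGroup V] [Module k V]
    (F : LinearMap.BilinForm k V) (U W : Submodule k V) (t : U ⊗[k] U) :
    Submodule k V :=
  LinearMap.range (W.subtype + U.subtype.comp (tensorToHom F U W t))

/-- Commensurability of two subspaces: `(W' + W'')/(W' ∩ W'')` is finite dimensional. -/
def Commens {k V : Type*} [Field k] [AddCommGroup V] [Module k V]
    (W' W'' : Submodule k V) : Prop :=
  FiniteDimensional k (↥(W' ⊔ W'') ⧸ Submodule.comap (W' ⊔ W'').subtype (W' ⊓ W''))

section DualTensorHom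

variable {k M N : Type*} [Field k] [AddCommGroup M] [Module k M] [AddCommGroup N] [Module k N]

theorem exists_finiteDimensional_eq_lTensor_subtype (x : Module.Dual k M ⊗[k] N) :
    ∃ (N' : Submodule k N) (_ : FiniteDimensional k N') (y : Module.Dual k M ⊗[k] N'),
      x = N'.subtype.lTensor _ y := by
  obtain ⟨N', hN', hx⟩ :=
    exists_finite_submodule_right_of_setFinite {x} (Set.finite_singleton x)
  obtain ⟨y, rfl⟩ := hx rfl
  exact ⟨N', hN', y, rfl⟩

theorem dualTensorHom_lTensor_subtype (N' : Submodule k N) (y : Module.Dual k M ⊗[k] N') :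
    dualTensorHom k M N (N'.subtype.lTensor _ y) = N'.subtype ∘ₗ dualTensorHom k M N' y :=
  LinearMap.congr_fun (dualTensorHom_comp_lTensor N'.subtype) y

theorem dualTensorHom_injective : Function.Injective (dualTensorHom k M N) := by
  refine (injective_iff_map_eq_zero _).mpr fun x hx ↦ ?_
  obtain ⟨N', _, y, rfl⟩ := exists_finiteDimensional_eq_lTensor_subtype x
  have hy : dualTensorHom k M N' y = 0 := by
    ext m
    simpa [dualTensorHom_lTensor_subtype] using LinearMap.congr_fun hx m
  rw [dualTensorHom_bijective_of_finite_projective_right.injective (hy.trans (map_zero _).symm),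
    map_zero]

theorem finiteDimensional_range_dualTensorHom (x : Module.Dual k M ⊗[k] N) :
    FiniteDimensional k (LinearMap.range (dualTensorHom k M N x)) := by
  obtain ⟨N', _, y, rfl⟩ := exists_finiteDimensional_eq_lTensor_subtype x
  rw [dualTensorHom_lTensor_subtype]
  exact Submodule.finiteDimensional_of_le
    ((LinearMap.range_comp_le_range _ _).trans N'.range_subtype.le)

end DualTensorHom

section Graph

variable {R V : Type*} [Ring R] [AddCommGroup V] [Module R V] {U W : Submodule R V}

def graphMap (f : W →ₗ[R] U) : W →ₗ[R] V := W.subtype + U.subtype ∘ₗ f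

@[simp]
theorem graphMap_apply (f : W →ₗ[R] U) (w : W) : graphMap f w = (w : V) + (f w : V) := rfl

theorem Submodule.eq_and_eq_of_add_eq_add {p q : Submodule R V} (hpq : Disjoint p q)
    {x x' y y' : V} (hx : x ∈ p) (hx' : x' ∈ p) (hy : y ∈ q) (hy' : y' ∈ q)
    (h : x + y = x' + y') : x = x' ∧ y = y' := by
  have := Submodule.disjoint_iff_add_eq_zero.mp hpq (p.sub_mem hx hx') (q.sub_mem hy hy')
    (by rw [sub_add_sub_comm, h, sub_self])
  exact ⟨sub_eq_zero.mp this.1, sub_eq_zero.mp this.2⟩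

theorem graphMap_injective (hUW : Disjoint U W) (f : W →ₗ[R] U) :
    Function.Injective (graphMap f) := by
  intro w w' h
  exact Subtype.ext (Submodule.eq_and_eq_of_add_eq_add hUW.symm w.2 w'.2 (f w).2 (f w').2 h).1

theorem isCompl_range_graphMap (hUW : IsCompl U W) (f : W →ₗ[R] U) :
    IsCompl U (LinearMap.range (graphMap f)) := by
  constructor
  · rw [Submodule.disjoint_def]
    rintro _ hxU ⟨w, rfl⟩
    obtain rfl : w = 0 := Subtype.ext (Submodule.eq_and_eq_of_add_eq_add hUW.disjoint.symm w.2
      W.zero_mem (f w).2 hxU (zero_add _).symm).1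
    simp
  · rw [codisjoint_iff, eq_top_iff]
    intro v _
    obtain ⟨u, hu, w, hw, rfl⟩ :=
      Submodule.mem_sup.mp (hUW.sup_eq_top ▸ Submodule.mem_top (x := v))
    exact Submodule.mem_sup.mpr
      ⟨u - f ⟨w, hw⟩, U.sub_mem hu (f ⟨w, hw⟩).2, _, ⟨⟨w, hw⟩, rfl⟩, by simp⟩

theorem range_graphMap_injective (hUW : Disjoint U W) :
    Function.Injective fun f : W →ₗ[R] U ↦ LinearMap.range (graphMap f) := by
  intro f g hfg
  ext w
  obtain ⟨w', hw'⟩ : graphMap f w ∈ LinearMap.range (graphMap g) := by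
    rw [← show LinearMap.range (graphMap f) = LinearMap.range (graphMap g) from hfg]
    exact ⟨w, rfl⟩
  obtain ⟨hww', hfg'⟩ := Submodule.eq_and_eq_of_add_eq_add hUW.symm w'.2 w.2 (g w').2 (f w).2 hw'
  rw [Subtype.ext hww'] at hfg'
  exact hfg'.symm

end Graph

section Commens

variable {k V : Type*} [Field k] [AddCommGroup V] [Module k V]

theorem finiteDimensional_quotient_of_ker_le {M N : Type*} [AddCommGroup M] [Module k M]
    [AddCommGroup N] [Module k N] (φ : M →ₗ[k] N) [FiniteDimensional k (LinearMap.range φ)]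
    {p : Submodule k M} (h : LinearMap.ker φ ≤ p) : FiniteDimensional k (M ⧸ p) :=
  Module.Finite.of_surjective (Submodule.factor h ∘ₗ φ.quotKerEquivRange.symm.toLinearMap)
    ((Submodule.factor_surjective h).comp φ.quotKerEquivRange.symm.surjective)

theorem commens_of_finiteDimensional_quotient {p q : Submodule k V}
    [FiniteDimensional k (p ⧸ Submodule.comap p.subtype q)]
    [FiniteDimensional k (q ⧸ Submodule.comap q.subtype p)] :
    Commens p q := by
  set A := Submodule.comap (p ⊔ q).subtype (p ⊓ q)
  have hp :
      Submodule.comap p.subtype q ≤ LinearMap.ker (A.mkQ ∘ₗ Submodule.inclusion le_sup_left) :=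
    fun x hx ↦ (Submodule.Quotient.mk_eq_zero _).mpr ⟨x.2, hx⟩
  have hq :
      Submodule.comap q.subtype p ≤ LinearMap.ker (A.mkQ ∘ₗ Submodule.inclusion le_sup_right) :=
    fun y hy ↦ (Submodule.Quotient.mk_eq_zero _).mpr ⟨hy, y.2⟩
  refine Module.Finite.of_surjective ((Submodule.liftQ _ _ hp).coprod (Submodule.liftQ _ _ hq)) ?_
  intro z
  obtain ⟨⟨b, hb⟩, rfl⟩ := A.mkQ_surjective z
  obtain ⟨x, hx, y, hy, rfl⟩ := Submodule.mem_sup.mp hb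
  refine ⟨(Submodule.Quotient.mk ⟨x, hx⟩, Submodule.Quotient.mk ⟨y, hy⟩), ?_⟩
  simp only [LinearMap.coprod_apply, Submodule.liftQ_apply]
  rfl

theorem commens_range_graphMap {U W : Submodule k V} (hUW : Disjoint U W) (f : W →ₗ[k] U)
    [FiniteDimensional k (LinearMap.range f)] : Commens W (LinearMap.range (graphMap f)) := by
  set G := LinearMap.range (graphMap f)
  set e := LinearEquiv.ofInjective (graphMap f) (graphMap_injective hUW f)
  have : FiniteDimensional k (W ⧸ Submodule.comap W.subtype G) :=
    finiteDimensional_quotient_of_ker_le f fun w hw ↦ ⟨w, by simp [LinearMap.mem_ker.mp hw]⟩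
  have : FiniteDimensional k (LinearMap.range (f ∘ₗ e.symm.toLinearMap)) := by
    rw [LinearMap.range_comp_of_range_eq_top _ e.symm.range]
    infer_instance
  have : FiniteDimensional k (G ⧸ Submodule.comap G.subtype W) := by
    refine finiteDimensional_quotient_of_ker_le (f ∘ₗ e.symm.toLinearMap) fun x hx ↦ ?_
    rw [Submodule.mem_comap, Submodule.subtype_apply, ← e.apply_symm_apply x,
      LinearEquiv.ofInjective_apply, graphMap_apply, show f (e.symm x) = 0 from hx,
      Submodule.coe_zero, add_zero]
    exact (e.symm x).2
  exact commens_of_finiteDimensional_quotient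

end Commens

section TensorToHom

variable {k V : Type*} [Field k] [AddCommGroup V] [Module k V] (F : LinearMap.BilinForm k V)
  {U W : Submodule k V}

theorem eq_zero_of_apply_eq_zero_of_isotropic (hF : LinearMap.SeparatingRight F)
    (hUW : Codisjoint U W) (hU : ∀ u ∈ U, ∀ u' ∈ U, F u u' = 0) {u : V} (hu : u ∈ U)
    (hW : ∀ w ∈ W, F w u = 0) :
    u = 0 := by
  refine hF u fun v ↦ ?_
  obtain ⟨u', hu', w, hw, rfl⟩ := Submodule.mem_sup.mp (hUW.eq_top ▸ Submodule.mem_top (x := v))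
  rw [LinearMap.map_add₂, hU u' hu' u hu, hW w hw, add_zero]

theorem tensorToHom_injective (hF : LinearMap.SeparatingRight F) (hUW : Codisjoint U W)
    (hU : ∀ u ∈ U, ∀ u' ∈ U, F u u' = 0) : Function.Injective (tensorToHom F U W) := by
  refine dualTensorHom_injective.comp (Module.Flat.rTensor_preserves_injective_linearMap _ ?_)
  refine (injective_iff_map_eq_zero _).mpr fun u hu ↦ Subtype.ext ?_
  exact eq_zero_of_apply_eq_zero_of_isotropic F hF hUW hU u.2
    fun w hw ↦ LinearMap.congr_fun hu ⟨w, hw⟩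

instance finiteDimensional_range_tensorToHom (t : U ⊗[k] U) :
    FiniteDimensional k (LinearMap.range (tensorToHom F U W t)) :=
  finiteDimensional_range_dualTensorHom _

end TensorToHom

theorem graphSubspace_properties_general
    {k V : Type*} [Field k] [AddCommGroup V] [Module k V]
    (F : LinearMap.BilinForm k V) (hnd : F.Nondegenerate)
    (U W : Submodule k V) (hUW : IsCompl U W)
    (hU : ∀ u ∈ U, ∀ u' ∈ U, F u u' = 0)
    (t : U ⊗[k] U) :
    IsCompl U (graphSubspace F U W t) ∧
    Commens W (graphSubspace F U W t) ∧
    (∃ e : W ≃ₗ[k] ↥(graphSubspace F U W t),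
      ∀ w : W, (e w : V) = (w : V) + (tensorToHom F U W t w : V)) ∧
    (∀ t' : U ⊗[k] U, graphSubspace F U W t = graphSubspace F U W t' ↔ t = t') :=
  ⟨isCompl_range_graphMap hUW _, commens_range_graphMap hUW.disjoint _,
    ⟨LinearEquiv.ofInjective _ (graphMap_injective hUW.disjoint _), fun _ ↦ rfl⟩,
    fun _ ↦ ((range_graphMap_injective hUW.disjoint).comp
      (tensorToHom_injective F hnd.2 hUW.codisjoint hU)).eq_iff⟩

/-- For a Lagrangian decomposition `V = U ⊕ W` and `t ∈ U ⊗ U` with associated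
map `f_t : W → U` and `W_t = {w + f_t(w)}`: `V = U ⊕ W_t`; `W_t` is commensurable with `W`;
`w ↦ w + f_t(w)` is a linear isomorphism `W → W_t`; and `W_t = W_{t'}` iff `t = t'`. -/
theorem graphSubspace_properties
    {k V : Type*} [Field k] [AddCommGroup V] [Module k V]
    (hchar : (2 : k) ≠ 0)
    (F : LinearMap.BilinForm k V) (hsymm : F.IsSymm) (hnd : F.Nondegenerate)
    (U W : Submodule k V) (hUW : IsCompl U W)
    (hU : ∀ u ∈ U, ∀ u' ∈ U, F u u' = 0)
    (hW : ∀ w ∈ W, ∀ w' ∈ W, F w w' = 0)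
    (t : U ⊗[k] U) :
    IsCompl U (graphSubspace F U W t) ∧
    Commens W (graphSubspace F U W t) ∧
    (∃ e : W ≃ₗ[k] ↥(graphSubspace F U W t),
      ∀ w : W, (e w : V) = (w : V) + (tensorToHom F U W t w : V)) ∧
    (∀ t' : U ⊗[k] U, graphSubspace F U W t = graphSubspace F U W t' ↔ t = t') :=
  graphSubspace_properties_general F hnd U W hUW hU t
end

section
/- Let (R, δ) be a Lie bialgebra over a field k with char(k) ≠ 2 and t ∈ Λ²R. Then δ_t := δ + ∂_t (where ∂_t(a) = [a⊗1 + 1⊗a, t]) is a Lie bialgebra cobracket on R if and only if the tensor alt((δ⊗1)(t)) − [[t,t]] ∈ R⊗R⊗R is ad-invariant, where [[t,t]] = [t^{12},t^{13}] + [t^{12},t^{23}] + [t^{13},t^{23}] and alt(a⊗b⊗c) = a⊗b⊗c + c⊗a⊗b + b⊗c⊗a. -/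
open TensorProduct

attribute [local instance 100] LieRing.ofAssociativeRing

namespace Stmt5

variable (k R : Type*) [CommRing k] [LieRing R] [LieAlgebra k R]

/-- The cyclic permutation `a ⊗ b ⊗ c ↦ c ⊗ a ⊗ b` on the triple tensor product. -/
noncomputable def cyc : (R ⊗[k] R) ⊗[k] R →ₗ[k] (R ⊗[k] R) ⊗[k] R :=
  ((TensorProduct.assoc k R R R).symm.toLinearMap).comp
    (TensorProduct.comm k (R ⊗[k] R) R).toLinearMap

/-- The alternation map `alt = 1 + cyc + cyc²`. -/
noncomputable def altMap : (R ⊗[k] R) ⊗[k] R →ₗ[k] (R ⊗[k] R) ⊗[k] R :=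
  LinearMap.id + cyc k R + (cyc k R).comp (cyc k R)

/-- The Lie bracket `R ⊗ R → R`, `a ⊗ b ↦ ⁅a, b⁆`, as a linear map. -/
noncomputable def brkt : R ⊗[k] R →ₗ[k] R :=
  TensorProduct.lift (LieModule.toEnd k R R).toLinearMap

/-- `(a ⊗ b) ⊗ (c ⊗ d) ↦ ⁅a,c⁆ ⊗ b ⊗ d` : computes `[t¹², s¹³]`. -/
noncomputable def phi12_13 : (R ⊗[k] R) ⊗[k] (R ⊗[k] R) →ₗ[k] (R ⊗[k] R) ⊗[k] R :=
  ((TensorProduct.assoc k R R R).symm.toLinearMap).comp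
    ((TensorProduct.map (brkt k R) LinearMap.id).comp
      (tensorTensorTensorComm k R R R R).toLinearMap)

/-- `(a ⊗ b) ⊗ (c ⊗ d) ↦ a ⊗ ⁅b,c⁆ ⊗ d` : computes `[t¹², s²³]`. -/
noncomputable def phi12_23 : (R ⊗[k] R) ⊗[k] (R ⊗[k] R) →ₗ[k] (R ⊗[k] R) ⊗[k] R :=
  ((TensorProduct.assoc k R R R).symm.toLinearMap).comp
    ((TensorProduct.map LinearMap.id (TensorProduct.map (brkt k R) LinearMap.id)).comp
      ((TensorProduct.map LinearMap.id (TensorProduct.assoc k R R R).symm.toLinearMap).comp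
        (TensorProduct.assoc k R R (R ⊗[k] R)).toLinearMap))

/-- `(a ⊗ b) ⊗ (c ⊗ d) ↦ a ⊗ c ⊗ ⁅b,d⁆` : computes `[t¹³, s²³]`. -/
noncomputable def phi13_23 : (R ⊗[k] R) ⊗[k] (R ⊗[k] R) →ₗ[k] (R ⊗[k] R) ⊗[k] R :=
  (TensorProduct.map LinearMap.id (brkt k R)).comp
    (tensorTensorTensorComm k R R R R).toLinearMap

/-- `[[t,t]] = [t¹²,t¹³] + [t¹²,t²³] + [t¹³,t²³]`. -/
noncomputable def doubleBracket (t : R ⊗[k] R) : (R ⊗[k] R) ⊗[k] R :=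
  phi12_13 k R (t ⊗ₜ t) + phi12_23 k R (t ⊗ₜ t) + phi13_23 k R (t ⊗ₜ t)

/-- The coboundary `∂ₜ : a ↦ ⁅a ⊗ 1 + 1 ⊗ a, t⁆ = a ∘ t`, as a linear map. -/
noncomputable def coboundary (t : R ⊗[k] R) : R →ₗ[k] R ⊗[k] R :=
  (LieModule.toEnd k R (R ⊗[k] R)).toLinearMap.flip t

/-- `δ` is a Lie bialgebra cobracket: skew-symmetric cocycle satisfying co-Jacobi. -/
def IsLieCobracket (δ : R →ₗ[k] R ⊗[k] R) : Prop :=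
  (∀ a : R, (TensorProduct.comm k R R) (δ a) = -δ a) ∧
  (∀ a b : R, δ ⁅a, b⁆ = ⁅a, δ b⁆ - ⁅b, δ a⁆) ∧
  (∀ a : R, altMap k R ((TensorProduct.map δ LinearMap.id) (δ a)) = 0)

/-- A triple tensor is ad-invariant if it is killed by the adjoint action of every element. -/
def IsAdInvariant3 (s : (R ⊗[k] R) ⊗[k] R) : Prop := ∀ a : R, ⁅a, s⁆ = 0

end Stmt5

/-!
Expanding the co-Jacobi expression of `δ + ∂ₜ` gives `alt((δ⊗1)δa) = 0`, two cross terms and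
`alt((∂ₜ⊗1)∂ₜa)`. Everything rests on the identity `alt((∂ₛ⊗1)t) = -([[s,t]] + [[t,s]])` for
skew `s, t`, where `[[s,t]]` is the polarization of `[[t,t]]`: it is checked on `s = x∧y`,
`t = z∧w`, and since `2` is invertible every skew tensor is a sum of such wedges.
The cocycle condition gives `(δ⊗1)(a∘t) = a∘(δ⊗1)t − (∂_{δa}⊗1)t`, so by the symmetry of the
identity the cross terms add up to `a∘alt((δ⊗1)t)`. Since `∂ₜa = a∘t` is again skew and `[[·,·]]`
is ad-equivariant, the last term is `−a∘[[t,t]]`.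
-/

namespace Stmt5

variable {k R : Type*} [CommRing k] [LieRing R] [LieAlgebra k R]

@[simp] lemma cyc_tmul (x y z : R) : cyc k R ((x ⊗ₜ y) ⊗ₜ z) = (z ⊗ₜ x) ⊗ₜ y := rfl

lemma altMap_apply (X : (R ⊗[k] R) ⊗[k] R) :
    altMap k R X = X + cyc k R X + cyc k R (cyc k R X) := rfl

@[simp] lemma coboundary_apply (t : R ⊗[k] R) (a : R) : coboundary k R t a = ⁅a, t⁆ := rfl

lemma coboundary_add (s t : R ⊗[k] R) :
    coboundary k R (s + t) = coboundary k R s + coboundary k R t :=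
  map_add _ s t

@[simp] lemma coboundary_zero : coboundary k R 0 = 0 := map_zero _

@[simp] lemma phi12_13_tmul (a b c d : R) :
    phi12_13 k R ((a ⊗ₜ b) ⊗ₜ (c ⊗ₜ d)) = (⁅a, c⁆ ⊗ₜ b) ⊗ₜ d := rfl

@[simp] lemma phi12_23_tmul (a b c d : R) :
    phi12_23 k R ((a ⊗ₜ b) ⊗ₜ (c ⊗ₜ d)) = (a ⊗ₜ ⁅b, c⁆) ⊗ₜ d := rfl

@[simp] lemma phi13_23_tmul (a b c d : R) :
    phi13_23 k R ((a ⊗ₜ b) ⊗ₜ (c ⊗ₜ d)) = (a ⊗ₜ c) ⊗ₜ ⁅b, d⁆ := rfl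

lemma comm_lie (a : R) (x : R ⊗[k] R) :
    TensorProduct.comm k R R ⁅a, x⁆ = ⁅a, TensorProduct.comm k R R x⁆ := by
  induction x using TensorProduct.induction_on with
  | zero => simp
  | tmul p q => simp [LieModule.lie_tmul_right, add_comm]
  | add p q hp hq => simp [lie_add, hp, hq]

lemma cyc_lie (a : R) (X : (R ⊗[k] R) ⊗[k] R) : cyc k R ⁅a, X⁆ = ⁅a, cyc k R X⁆ := by
  have h : (cyc k R) ∘ₗ LieModule.toEnd k R _ a = LieModule.toEnd k R _ a ∘ₗ cyc k R := by
    ext x y z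
    simp only [AlgebraTensorModule.curry_apply, LinearMap.restrictScalars_self, curry_apply,
      LinearMap.coe_comp, Function.comp_apply, LieModule.toEnd_apply_apply,
      LieModule.lie_tmul_right, add_tmul, map_add, cyc_tmul]
    abel
  exact LinearMap.congr_fun h X

lemma altMap_lie (a : R) (X : (R ⊗[k] R) ⊗[k] R) : altMap k R ⁅a, X⁆ = ⁅a, altMap k R X⁆ := by
  simp only [altMap_apply, cyc_lie, lie_add]

lemma map_lie_of_cocycle (δ : R →ₗ[k] R ⊗[k] R) (hδ : ∀ a b : R, δ ⁅a, b⁆ = ⁅a, δ b⁆ - ⁅b, δ a⁆)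
    (a : R) (T : R ⊗[k] R) :
    map δ LinearMap.id ⁅a, T⁆ =
      ⁅a, map δ LinearMap.id T⁆ - map (coboundary k R (δ a)) LinearMap.id T := by
  induction T using TensorProduct.induction_on with
  | zero => simp
  | tmul x y =>
    simp only [LieModule.lie_tmul_right, map_add, map_tmul, hδ, LinearMap.id_coe, id_eq,
      sub_tmul, coboundary_apply]
    abel
  | add T T' hT hT' => simp only [lie_add, map_add, hT, hT']; abel

variable (k R) in
noncomputable def doubleBracket₂ (s t : R ⊗[k] R) : (R ⊗[k] R) ⊗[k] R :=
  (phi12_13 k R + phi12_23 k R + phi13_23 k R) (s ⊗ₜ t)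

lemma doubleBracket_eq_doubleBracket₂ (t : R ⊗[k] R) :
    doubleBracket k R t = doubleBracket₂ k R t t := rfl

lemma doubleBracket₂_add_left (s s' t : R ⊗[k] R) :
    doubleBracket₂ k R (s + s') t = doubleBracket₂ k R s t + doubleBracket₂ k R s' t := by
  rw [doubleBracket₂, add_tmul, map_add]; rfl

lemma doubleBracket₂_add_right (s t t' : R ⊗[k] R) :
    doubleBracket₂ k R s (t + t') = doubleBracket₂ k R s t + doubleBracket₂ k R s t' := by
  rw [doubleBracket₂, tmul_add, map_add]; rfl

lemma lie_doubleBracket₂ (a : R) (s t : R ⊗[k] R) :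
    ⁅a, doubleBracket₂ k R s t⁆ = doubleBracket₂ k R ⁅a, s⁆ t + doubleBracket₂ k R s ⁅a, t⁆ := by
  set Φ := phi12_13 k R + phi12_23 k R + phi13_23 k R
  have h : Φ ∘ₗ LieModule.toEnd k R _ a = LieModule.toEnd k R _ a ∘ₗ Φ := by
    ext x y z w
    simp only [AlgebraTensorModule.curry_apply, LinearMap.restrictScalars_self, curry_apply,
      LinearMap.coe_comp, Function.comp_apply, LieModule.toEnd_apply_apply,
      LieModule.lie_tmul_right, add_tmul, tmul_add, LinearMap.add_apply, map_add, phi12_13_tmul,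
      phi12_23_tmul, phi13_23_tmul, Φ]
    rw [leibniz_lie a x z, leibniz_lie a y z, leibniz_lie a y w]
    simp only [add_tmul, tmul_add]
    abel
  rw [doubleBracket₂, doubleBracket₂, doubleBracket₂, ← map_add, ← LieModule.lie_tmul_right]
  exact (LinearMap.congr_fun h _).symm

variable (k R) in
noncomputable def antisymmetrize : R ⊗[k] R →ₗ[k] R ⊗[k] R :=
  LinearMap.id - (TensorProduct.comm k R R).toLinearMap

lemma antisymmetrize_tmul (x y : R) : antisymmetrize k R (x ⊗ₜ y) = x ⊗ₜ y - y ⊗ₜ x := rfl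

lemma exists_antisymmetrize_eq [Invertible (2 : k)] {t : R ⊗[k] R}
    (ht : TensorProduct.comm k R R t = -t) : ∃ u, antisymmetrize k R u = t :=
  ⟨(⅟2 : k) • t, by
    rw [antisymmetrize, LinearMap.sub_apply, LinearMap.id_apply, LinearEquiv.coe_coe, map_smul, ht,
      smul_neg, sub_neg_eq_add, ← add_smul, invOf_two_add_invOf_two, one_smul]⟩

lemma altMap_map_coboundary_antisymmetrize_tmul (x y z w : R) :
    altMap k R (map (coboundary k R (antisymmetrize k R (x ⊗ₜ y))) LinearMap.id
        (antisymmetrize k R (z ⊗ₜ w))) =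
      -(doubleBracket₂ k R (antisymmetrize k R (x ⊗ₜ y)) (antisymmetrize k R (z ⊗ₜ w)) +
        doubleBracket₂ k R (antisymmetrize k R (z ⊗ₜ w)) (antisymmetrize k R (x ⊗ₜ y))) := by
  rw [eq_neg_iff_add_eq_zero, ← add_assoc]
  -- orient every bracket with `x` or `y` on the left, so that `abel` can match the terms
  have hzx : ⁅z, x⁆ = -⁅x, z⁆ := (lie_skew z x).symm
  have hwx : ⁅w, x⁆ = -⁅x, w⁆ := (lie_skew w x).symm
  have hzy : ⁅z, y⁆ = -⁅y, z⁆ := (lie_skew z y).symm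
  have hwy : ⁅w, y⁆ = -⁅y, w⁆ := (lie_skew w y).symm
  simp only [antisymmetrize_tmul, doubleBracket₂, altMap_apply, lie_sub, map_sub, map_add,
    LieModule.lie_tmul_right, map_tmul, coboundary_apply, LinearMap.id_coe, id_eq, cyc_tmul,
    sub_tmul, tmul_sub, add_tmul, LinearMap.add_apply, phi12_13_tmul, phi12_23_tmul,
    phi13_23_tmul, hzx, hwx, hzy, hwy, neg_tmul, tmul_neg, map_neg]
  abel

lemma altMap_map_coboundary_antisymmetrize (u v : R ⊗[k] R) :
    altMap k R (map (coboundary k R (antisymmetrize k R u)) LinearMap.id (antisymmetrize k R v)) =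
      -(doubleBracket₂ k R (antisymmetrize k R u) (antisymmetrize k R v) +
        doubleBracket₂ k R (antisymmetrize k R v) (antisymmetrize k R u)) := by
  induction u using TensorProduct.induction_on with
  | zero => simp [doubleBracket₂]
  | tmul x y =>
    induction v using TensorProduct.induction_on with
    | zero => simp [doubleBracket₂]
    | tmul z w => exact altMap_map_coboundary_antisymmetrize_tmul x y z w
    | add v v' hv hv' =>
      simp only [map_add, doubleBracket₂_add_left, doubleBracket₂_add_right, hv, hv']
      abel
  | add u u' hu hu' =>
    simp only [map_add, coboundary_add, map_add_left, LinearMap.add_apply, doubleBracket₂_add_left,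
      doubleBracket₂_add_right, hu, hu']
    abel

lemma altMap_map_coboundary_of_skew [Invertible (2 : k)] {s t : R ⊗[k] R}
    (hs : TensorProduct.comm k R R s = -s) (ht : TensorProduct.comm k R R t = -t) :
    altMap k R (map (coboundary k R s) LinearMap.id t) =
      -(doubleBracket₂ k R s t + doubleBracket₂ k R t s) := by
  obtain ⟨u, rfl⟩ := exists_antisymmetrize_eq hs
  obtain ⟨v, rfl⟩ := exists_antisymmetrize_eq ht
  exact altMap_map_coboundary_antisymmetrize u v

lemma comm_lie_of_skew {t : R ⊗[k] R} (ht : TensorProduct.comm k R R t = -t) (a : R) :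
    TensorProduct.comm k R R ⁅a, t⁆ = -⁅a, t⁆ := by
  rw [comm_lie, ht, lie_neg]

lemma altMap_map_lie_add_altMap_map_coboundary [Invertible (2 : k)] (δ : R →ₗ[k] R ⊗[k] R)
    (hδ : ∀ a b : R, δ ⁅a, b⁆ = ⁅a, δ b⁆ - ⁅b, δ a⁆) {a : R}
    (hδa : TensorProduct.comm k R R (δ a) = -δ a) {t : R ⊗[k] R}
    (ht : TensorProduct.comm k R R t = -t) :
    altMap k R (map δ LinearMap.id ⁅a, t⁆) +
        altMap k R (map (coboundary k R t) LinearMap.id (δ a)) =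
      ⁅a, altMap k R (map δ LinearMap.id t)⁆ := by
  rw [map_lie_of_cocycle δ hδ, map_sub, altMap_lie, altMap_map_coboundary_of_skew hδa ht,
    altMap_map_coboundary_of_skew ht hδa, add_comm (doubleBracket₂ k R t _)]
  abel

lemma altMap_map_coboundary_coboundary [Invertible (2 : k)] {t : R ⊗[k] R}
    (ht : TensorProduct.comm k R R t = -t) (a : R) :
    altMap k R (map (coboundary k R t) LinearMap.id (coboundary k R t a)) =
      -⁅a, doubleBracket k R t⁆ := by
  rw [coboundary_apply, altMap_map_coboundary_of_skew ht (comm_lie_of_skew ht a),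
    doubleBracket_eq_doubleBracket₂, lie_doubleBracket₂, add_comm]

lemma altMap_map_add_coboundary [Invertible (2 : k)] {δ : R →ₗ[k] R ⊗[k] R}
    (hδ : IsLieCobracket k R δ) {t : R ⊗[k] R} (ht : TensorProduct.comm k R R t = -t) (a : R) :
    altMap k R (map (δ + coboundary k R t) LinearMap.id ((δ + coboundary k R t) a)) =
      ⁅a, altMap k R (map δ LinearMap.id t) - doubleBracket k R t⁆ := by
  obtain ⟨hskew, hcocycle, hcoJacobi⟩ := hδ
  have hcross := altMap_map_lie_add_altMap_map_coboundary δ hcocycle (hskew a) ht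
  simp only [LinearMap.add_apply, map_add_left, map_add, hcoJacobi,
    altMap_map_coboundary_coboundary ht]
  rw [lie_sub, coboundary_apply, ← hcross]
  abel

lemma isLieCobracket_add_coboundary_iff {δ : R →ₗ[k] R ⊗[k] R}
    (hskew : ∀ a : R, TensorProduct.comm k R R (δ a) = -δ a)
    (hcocycle : ∀ a b : R, δ ⁅a, b⁆ = ⁅a, δ b⁆ - ⁅b, δ a⁆)
    {t : R ⊗[k] R} (ht : TensorProduct.comm k R R t = -t) :
    IsLieCobracket k R (δ + coboundary k R t) ↔
      ∀ a, altMap k R (map (δ + coboundary k R t) LinearMap.id ((δ + coboundary k R t) a)) =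
        0 := by
  refine ⟨fun h => h.2.2, fun h => ⟨fun a => ?_, fun a b => ?_, h⟩⟩
  · rw [LinearMap.add_apply, map_add, hskew, coboundary_apply, comm_lie_of_skew ht, neg_add]
  · simp only [LinearMap.add_apply, coboundary_apply, hcocycle a b, lie_lie, lie_add]
    abel

end Stmt5

open Stmt5

/-- For a Lie bialgebra `(R, δ)` over a field of characteristic ≠ 2 and a
skew tensor `t ∈ Λ²R`, the twisted map `δ_t = δ + ∂ₜ` is a Lie bialgebra cobracket if and
only if `alt((δ⊗1)(t)) − [[t,t]]` is an ad-invariant element of `R ⊗ R ⊗ R`. -/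
theorem twist_isLieCobracket_iff
    {k R : Type*} [Field k] [LieRing R] [LieAlgebra k R]
    (hchar : (2 : k) ≠ 0)
    (δ : R →ₗ[k] R ⊗[k] R) (hδ : IsLieCobracket k R δ)
    (t : R ⊗[k] R) (ht : (TensorProduct.comm k R R) t = -t) :
    IsLieCobracket k R (δ + coboundary k R t) ↔
      IsAdInvariant3 k R
        (altMap k R ((TensorProduct.map δ LinearMap.id) t) - doubleBracket k R t) := by
  have := invertibleOfNonzero hchar
  rw [isLieCobracket_add_coboundary_iff hδ.1 hδ.2.1 ht]
  simp only [altMap_map_add_coboundary hδ ht]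
  rfl
end
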